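/- arXiv:2203.13065 — 3 statements merged into one kernel-verified Lean document; each statement's English description precedes it below -/
import Mathlib

section
/- Let A be a 2×2 real matrix with distinct eigenvalues λ₁ > λ₂ > 0 and diagonal entry a satisfying λ₁ ≥ a ≥ λ₂. Then the system x'(t) = Ax(t) is Hyers-Ulam stable on ℝ with constant K = ‖A⁻¹‖_∞: for every ε > 0 and every differentiable φ: ℝ → ℝ² with ‖φ'(t) − Aφ(t)‖_∞ ≤ ε on ℝ, there exists a solution x of x' = Ax with ‖φ(t) − x(t)‖_∞ ≤ ‖A⁻¹‖_∞ · ε for all t ∈ ℝ. -/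
open Matrix

/-- Induced matrix max-norm (maximum row sum of absolute values). -/
noncomputable def matNormInf (M : Matrix (Fin 2) (Fin 2) ℝ) : ℝ :=
  max (|M 0 0| + |M 0 1|) (|M 1 0| + |M 1 1|)

/-!
As `0 < λ₂ < λ₁`, `exp (u • A) → 0` when `u → -∞`, so `x₀ = lim_{s → ∞} exp (-s • A) *ᵥ φ s`
exists and `φ t - exp (t • A) *ᵥ x₀ = -∫_t^∞ exp ((t - s) • A) *ᵥ (φ' - A *ᵥ φ) s ds`. If every
entry of `exp (u • A)` keeps one sign on `u ≤ 0`, the `i`-th component of this integral is at most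
`ε * ∑ⱼ |∫_{-∞}^0 exp (u • A) i j du| = ε * ∑ⱼ |A⁻¹ i j|`. The integrals are replaced by fences:
with `σ i j` the sign of `exp (u • A) i j`, the `i`-th component of `exp ((t - s) • A) *ᵥ φ s`
moves, as `s` grows, no faster than `-ε * (exp ((t - s) • A) *ᵥ (A⁻¹ *ᵥ σ i)) i`.

When `(A - λ₁)(A - λ₂) = 0`, `exp (u • A) = e^{λ₁ u} P₁ + e^{λ₂ u} P₂` with the spectral projections
`P₁ = (A - λ₂)/(λ₁ - λ₂)` and `P₂ = (λ₁ - A)/(λ₁ - λ₂)`. As `P₁ + P₂ = 1`, an off-diagonal entry is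
a multiple of `e^{λ₁ u} - e^{λ₂ u}`, and a diagonal one is a nonnegative combination as soon as
`λ₂ ≤ A i i ≤ λ₁`. For a `2 × 2` matrix, Cayley–Hamilton gives `(A - λ₁)(A - λ₂) = 0`, and the
trace puts `A 1 1 = λ₁ + λ₂ - A 0 0` in `[λ₂, λ₁]` along with `A 0 0`.
-/

open Filter Topology NormedSpace Set

theorem norm_image_sub_le_of_norm_deriv_le_deriv {E : Type*} [NormedAddCommGroup E]
    [NormedSpace ℝ E] {f f' : ℝ → E} {B B' : ℝ → ℝ} {a b : ℝ} (hab : a ≤ b)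
    (hf : ∀ x ∈ Icc a b, HasDerivAt f (f' x) x) (hB : ∀ x ∈ Icc a b, HasDerivAt B (B' x) x)
    (bound : ∀ x ∈ Icc a b, ‖f' x‖ ≤ B' x) : ‖f b - f a‖ ≤ B b - B a := by
  refine image_norm_le_of_norm_deriv_right_le_deriv_boundary' (f := fun x => f x - f a)
    (B := fun x => B x - B a) ?_ (fun x hx => ?_) (by simp) ?_ (fun x hx => ?_)
    (fun x hx => bound x (Ico_subset_Icc_self hx)) (right_mem_Icc.2 hab)
  · exact fun x hx => ((hf x hx).continuousAt.sub continuousAt_const).continuousWithinAt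
  · exact ((hf x (Ico_subset_Icc_self hx)).sub_const (f a)).hasDerivWithinAt
  · exact fun x hx => ((hB x hx).continuousAt.sub continuousAt_const).continuousWithinAt
  · exact ((hB x (Ico_subset_Icc_self hx)).sub_const (B a)).hasDerivWithinAt

section Fence

variable {E : Type*} [NormedAddCommGroup E] {u : ℝ → E} {B : ℝ → ℝ} {a : ℝ}

theorem cauchySeq_of_norm_sub_le_sub (hB : Tendsto B atTop (𝓝 0))
    (h : ∀ n m, a ≤ n → n ≤ m → ‖u m - u n‖ ≤ B m - B n) : CauchySeq u := by
  refine Metric.cauchySeq_iff'.2 fun δ hδ => ?_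
  obtain ⟨N, hN⟩ := eventually_atTop.1 <|
    (hB.eventually (Metric.ball_mem_nhds 0 (half_pos hδ))).and (eventually_ge_atTop a)
  refine ⟨N, fun n hn => ?_⟩
  have hn' := (hN n hn).1
  have hN' := (hN N le_rfl).1
  simp only [Real.dist_eq, sub_zero, abs_lt] at hn' hN'
  rw [dist_eq_norm]
  linarith [h N n (hN N le_rfl).2 hn]

theorem norm_sub_le_neg_of_tendsto {L : E} (hu : Tendsto u atTop (𝓝 L))
    (hB : Tendsto B atTop (𝓝 0)) (h : ∀ m, a ≤ m → ‖u m - u a‖ ≤ B m - B a) :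
    ‖L - u a‖ ≤ -B a := by
  simpa using le_of_tendsto_of_tendsto ((hu.sub_const (u a)).norm) (hB.sub_const (B a))
    (eventually_atTop.2 ⟨a, h⟩)

end Fence

theorem exists_abs_eq_mul_of_nonneg_or_nonpos {α : Type*} {f : α → ℝ} {s : Set α}
    (hf : (∀ x ∈ s, 0 ≤ f x) ∨ ∀ x ∈ s, f x ≤ 0) :
    ∃ σ : ℝ, |σ| ≤ 1 ∧ ∀ x ∈ s, |f x| = σ * f x := by
  rcases hf with hf | hf
  · exact ⟨1, by simp, fun x hx => by simp [abs_of_nonneg (hf x hx)]⟩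
  · exact ⟨-1, by simp, fun x hx => by simp [abs_of_nonpos (hf x hx)]⟩

theorem nonneg_or_nonpos_of_exp_combination {l₁ l₂ α β : ℝ} (hl : l₂ ≤ l₁)
    (h : (0 ≤ α ∧ 0 ≤ β) ∨ β = -α) :
    (∀ u : ℝ, u ≤ 0 → 0 ≤ Real.exp (l₁ * u) * α + Real.exp (l₂ * u) * β) ∨
      ∀ u : ℝ, u ≤ 0 → Real.exp (l₁ * u) * α + Real.exp (l₂ * u) * β ≤ 0 := by
  have hexp : ∀ u : ℝ, u ≤ 0 → Real.exp (l₁ * u) ≤ Real.exp (l₂ * u) := fun u hu =>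
    Real.exp_le_exp.2 (mul_le_mul_of_nonpos_right hl hu)
  rcases h with ⟨hα, hβ⟩ | rfl
  · exact Or.inl fun u _ => by positivity
  · rcases le_total 0 α with hα | hα
    · exact Or.inr fun u hu => by nlinarith [hexp u hu]
    · exact Or.inl fun u hu => by nlinarith [hexp u hu]

theorem mul_self_eq_of_mul_sub_eq_zero {R 𝔸 : Type*} [CommRing R] [Ring 𝔸] [Algebra R 𝔸]
    {A : 𝔸} {l₁ l₂ : R} (hA : (A - l₁ • 1) * (A - l₂ • 1) = 0) :
    A * A = (l₁ + l₂) • A - (l₁ * l₂) • 1 := by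
  rw [← sub_eq_zero, ← hA]
  simp only [sub_mul, mul_sub, smul_mul_assoc, mul_smul_comm, one_mul, mul_one]
  module

theorem hasDerivAt_exp_const_sub_smul {𝔸 : Type*} [NormedRing 𝔸] [NormedAlgebra ℝ 𝔸]
    [CompleteSpace 𝔸] (A : 𝔸) (t s : ℝ) :
    HasDerivAt (fun s : ℝ => exp ((t - s) • A)) (-(exp ((t - s) • A) * A)) s :=
  ((hasDerivAt_exp_smul_const A (t - s)).scomp s
    ((hasDerivAt_id s).const_sub t)).congr_deriv (by simp)

theorem eq_exp_smul_of_hasDerivAt {𝔸 : Type*} [NormedRing 𝔸] [NormedAlgebra ℝ 𝔸]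
    [CompleteSpace 𝔸] (A : 𝔸) {Y : ℝ → 𝔸} (hY : ∀ t, HasDerivAt Y (A * Y t) t)
    (hY0 : Y 0 = 1) (t : ℝ) : Y t = exp (t • A) := by
  have hZ : ∀ s, HasDerivAt (fun s => exp ((t - s) • A) * Y s) 0 s := fun s =>
    ((hasDerivAt_exp_const_sub_smul A t s).mul (hY s)).congr_deriv (by simp [mul_assoc])
  simpa [hY0] using is_const_of_deriv_eq_zero (fun s => (hZ s).differentiableAt)
    (fun s => (hZ s).deriv) t 0

theorem exp_smul_eq_of_mul_sub_eq_zero {𝔸 : Type*} [NormedRing 𝔸] [NormedAlgebra ℝ 𝔸]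
    [CompleteSpace 𝔸] {A : 𝔸} {l₁ l₂ : ℝ} (hl : l₁ ≠ l₂)
    (hA : (A - l₁ • 1) * (A - l₂ • 1) = 0) (u : ℝ) :
    exp (u • A) = Real.exp (l₁ * u) • (l₁ - l₂)⁻¹ • (A - l₂ • 1) +
      Real.exp (l₂ * u) • (l₁ - l₂)⁻¹ • (l₁ • 1 - A) := by
  have hsq := mul_self_eq_of_mul_sub_eq_zero hA
  have hP₁ : A * (A - l₂ • 1) = l₁ • (A - l₂ • 1) := by
    rw [mul_sub, mul_smul_comm, mul_one, hsq]; module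
  have hP₂ : A * (l₁ • 1 - A) = l₂ • (l₁ • 1 - A) := by
    rw [mul_sub, mul_smul_comm, mul_one, hsq]; module
  have hexp (l : ℝ) (P : 𝔸) (u : ℝ) :
      HasDerivAt (fun u => Real.exp (l * u) • P) ((l * Real.exp (l * u)) • P) u := by
    simpa [mul_comm] using (((hasDerivAt_id u).const_mul l).exp).smul_const P
  refine (eq_exp_smul_of_hasDerivAt A
    (Y := fun u => Real.exp (l₁ * u) • (l₁ - l₂)⁻¹ • (A - l₂ • 1) +
      Real.exp (l₂ * u) • (l₁ - l₂)⁻¹ • (l₁ • 1 - A))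
    (fun u => ((hexp _ _ u).add (hexp _ _ u)).congr_deriv ?_) ?_ u).symm
  · rw [mul_add, mul_smul_comm, mul_smul_comm, mul_smul_comm, mul_smul_comm, hP₁, hP₂]
    module
  · simp only [mul_zero, Real.exp_zero, one_smul]
    rw [← smul_add, sub_add_sub_cancel', ← sub_smul, inv_smul_smul₀ (sub_ne_zero.2 hl)]

theorem abs_mulVec_apply_le {m n : Type*} [Fintype n] {M : Matrix m n ℝ} {v σ : n → ℝ}
    {ε : ℝ} (i : m) (hv : ‖v‖ ≤ ε) (hσ : ∀ j, |M i j| = σ j * M i j) :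
    |(M *ᵥ v) i| ≤ ε * (M *ᵥ σ) i := by
  simp only [mulVec, dotProduct, Finset.mul_sum]
  refine (Finset.abs_sum_le_sum_abs _ _).trans (Finset.sum_le_sum fun j _ => ?_)
  calc |M i j * v j| = |M i j| * |v j| := abs_mul _ _
    _ ≤ |M i j| * ε := by gcongr; exact (norm_le_pi_norm v j).trans hv
    _ = ε * (M i j * σ j) := by rw [hσ]; ring

theorem exp_smul_mulVec_exp_smul_mulVec {n : Type*} [Fintype n] [DecidableEq n]
    (A : Matrix n n ℝ) (t u : ℝ) (v : n → ℝ) :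
    exp (t • A) *ᵥ (exp (u • A) *ᵥ v) = exp ((t + u) • A) *ᵥ v := by
  rw [mulVec_mulVec, add_smul,
    Matrix.exp_add_of_commute _ _ (((Commute.refl A).smul_left t).smul_right u)]

theorem tendsto_exp_const_sub_smul_mulVec {n : Type*} [Fintype n] [DecidableEq n]
    {A : Matrix n n ℝ} {ψ : ℝ → n → ℝ} {x₀ : n → ℝ}
    (h : Tendsto (fun s => exp ((0 - s) • A) *ᵥ ψ s) atTop (𝓝 x₀)) (t : ℝ) :
    Tendsto (fun s => exp ((t - s) • A) *ᵥ ψ s) atTop (𝓝 (exp (t • A) *ᵥ x₀)) := by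
  refine ((continuous_const.matrix_mulVec continuous_id).tendsto x₀).comp h |>.congr fun s => ?_
  rw [Function.comp_apply, id, exp_smul_mulVec_exp_smul_mulVec, ← add_sub_assoc, add_zero]

theorem Matrix.mul_sub_smul_one_eq_zero_of_trace_det {R : Type*} [CommRing R] [Nontrivial R]
    {A : Matrix (Fin 2) (Fin 2) R} {l₁ l₂ : R} (htr : A.trace = l₁ + l₂)
    (hdet : A.det = l₁ * l₂) : (A - l₁ • 1) * (A - l₂ • 1) = 0 := by
  have := A.aeval_self_charpoly
  rw [charpoly_fin_two, htr, hdet] at this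
  simp only [map_sub, map_add, map_mul, map_pow, Polynomial.aeval_X, Polynomial.aeval_C,
    Algebra.algebraMap_eq_smul_one] at this
  rw [← this]
  simp only [sub_mul, mul_sub, add_mul, smul_mul_assoc, mul_smul_comm, one_mul, mul_one, sq]
  module

def IsHyersUlamStable {n : Type*} [Fintype n] [DecidableEq n] (A : Matrix n n ℝ) (K : ℝ) :
    Prop :=
  ∀ ε > (0 : ℝ), ∀ φ : ℝ → n → ℝ, Differentiable ℝ φ → (∀ t, ‖deriv φ t - A *ᵥ φ t‖ ≤ ε) →
    ∃ x₀ : n → ℝ, ∀ t : ℝ, ‖φ t - exp (t • A) *ᵥ x₀‖ ≤ K * ε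

section

open scoped Matrix.Norms.Operator

theorem HasDerivAt.matrix_mulVec {𝕜 m n : Type*} [NontriviallyNormedField 𝕜] [Fintype m]
    [Fintype n] {M : 𝕜 → Matrix m n 𝕜} {v : 𝕜 → n → 𝕜} {M' : Matrix m n 𝕜} {v' : n → 𝕜}
    {x : 𝕜} (hM : HasDerivAt M M' x) (hv : HasDerivAt v v' x) :
    HasDerivAt (fun x => M x *ᵥ v x) (M x *ᵥ v' + M' *ᵥ v x) x := by
  let B := (mulVecBilin 𝕜 𝕜 : Matrix m n 𝕜 →ₗ[𝕜] _).mkContinuous₂ 1 fun M v => by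
    rw [one_mul]; exact linfty_opNorm_mulVec M v
  exact B.hasDerivAt_of_bilinear (fun _ => hM) (fun _ => hv)

theorem mulVec_apply_le_linfty_opNorm {m n : Type*} [Fintype m] [Fintype n] (M : Matrix m n ℝ)
    {σ : n → ℝ} (hσ : ∀ j, |σ j| ≤ 1) (i : m) : (M *ᵥ σ) i ≤ ‖M‖ :=
  calc (M *ᵥ σ) i ≤ ‖M *ᵥ σ‖ := (Real.le_norm_self _).trans (norm_le_pi_norm _ i)
    _ ≤ ‖M‖ * ‖σ‖ := linfty_opNorm_mulVec M σ
    _ ≤ ‖M‖ :=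
      mul_le_of_le_one_right (norm_nonneg M) ((pi_norm_le_iff_of_nonneg zero_le_one).2 hσ)

theorem matNormInf_eq_linfty_opNorm (M : Matrix (Fin 2) (Fin 2) ℝ) : matNormInf M = ‖M‖ := by
  rw [linfty_opNorm_def, Finset.univ_fin2]
  simp [matNormInf]

variable {n : Type*} [Fintype n] [DecidableEq n]

theorem hasDerivAt_exp_const_sub_smul_mulVec (A : Matrix n n ℝ) {φ : ℝ → n → ℝ} {φ' : n → ℝ}
    (t : ℝ) {s : ℝ} (hφ : HasDerivAt φ φ' s) :
    HasDerivAt (fun s => exp ((t - s) • A) *ᵥ φ s) (exp ((t - s) • A) *ᵥ (φ' - A *ᵥ φ s)) s :=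
  ((hasDerivAt_exp_const_sub_smul A t s).matrix_mulVec hφ).congr_deriv <| by
    rw [neg_mulVec, ← mulVec_mulVec, mulVec_sub, ← sub_eq_add_neg]
    -- `exp` on the left is taken in the normed ring of matrices, on the right in the plain one
    rfl

theorem tendsto_exp_const_sub_smul_atTop {A : Matrix n n ℝ}
    (hdecay : Tendsto (fun u : ℝ => exp (u • A)) atBot (𝓝 0)) (t : ℝ) :
    Tendsto (fun s : ℝ => exp ((t - s) • A)) atTop (𝓝 0) :=
  hdecay.comp (tendsto_atBot_add_const_left _ t tendsto_neg_atTop_atBot)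

theorem abs_exp_mulVec_sub_le {A : Matrix n n ℝ} (hA : IsUnit A.det) {S : Matrix n n ℝ}
    (hS : ∀ i j, ∀ u ∈ Iic (0 : ℝ), |exp (u • A) i j| = S i j * exp (u • A) i j)
    {φ : ℝ → n → ℝ} (hφ : Differentiable ℝ φ) {ε : ℝ} (hε : ∀ t, ‖deriv φ t - A *ᵥ φ t‖ ≤ ε)
    (i : n) {t r s : ℝ} (htr : t ≤ r) (hrs : r ≤ s) :
    |(exp ((t - s) • A) *ᵥ φ s) i - (exp ((t - r) • A) *ᵥ φ r) i| ≤
      -ε * (exp ((t - s) • A) *ᵥ (A⁻¹ *ᵥ S i)) i -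
        -ε * (exp ((t - r) • A) *ᵥ (A⁻¹ *ᵥ S i)) i := by
  refine norm_image_sub_le_of_norm_deriv_le_deriv (f := fun s => (exp ((t - s) • A) *ᵥ φ s) i)
    hrs (fun x _ => hasDerivAt_pi.1
      (hasDerivAt_exp_const_sub_smul_mulVec A t (hφ x).hasDerivAt) i)
    (fun x _ => (hasDerivAt_pi.1 (hasDerivAt_exp_const_sub_smul_mulVec A t
      (hasDerivAt_const x (A⁻¹ *ᵥ S i))) i).const_mul (-ε)) (fun x hx => ?_)
  simp only [zero_sub, mulVec_mulVec, mul_nonsing_inv A hA, one_mulVec, mulVec_neg,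
    Pi.neg_apply, mul_neg, neg_mul, neg_neg, Real.norm_eq_abs]
  exact abs_mulVec_apply_le i (hε x) fun j => hS i j (t - x) (by simp; linarith [hx.1])

theorem isHyersUlamStable_of_sign_constant {A : Matrix n n ℝ} (hA : IsUnit A.det)
    (hsign : ∀ i j,
      (∀ u : ℝ, u ≤ 0 → 0 ≤ exp (u • A) i j) ∨ ∀ u : ℝ, u ≤ 0 → exp (u • A) i j ≤ 0)
    (hdecay : Tendsto (fun u : ℝ => exp (u • A)) atBot (𝓝 0)) :
    IsHyersUlamStable A ‖A⁻¹‖ := by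
  intro ε hε φ hφ hdefect
  choose S hS1 hS using fun i j => exists_abs_eq_mul_of_nonneg_or_nonpos (s := Iic 0) (hsign i j)
  have hfence (t : ℝ) (i : n) :
      Tendsto (fun s => -ε * (exp ((t - s) • A) *ᵥ (A⁻¹ *ᵥ S i)) i) atTop (𝓝 0) := by
    have hcont : Continuous fun M : Matrix n n ℝ => -ε * (M *ᵥ (A⁻¹ *ᵥ S i)) i :=
      continuous_const.mul ((continuous_apply i).comp
        (continuous_id.matrix_mulVec continuous_const))
    have h := (hcont.tendsto 0).comp (tendsto_exp_const_sub_smul_atTop hdecay t)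
    rwa [zero_mulVec, Pi.zero_apply, mul_zero] at h
  have hlim (t : ℝ) (i : n) : ∃ L, Tendsto (fun s => (exp ((t - s) • A) *ᵥ φ s) i) atTop (𝓝 L) ∧
      |L - φ t i| ≤ ε * (A⁻¹ *ᵥ S i) i := by
    have hineq {r s : ℝ} (htr : t ≤ r) (hrs : r ≤ s) :=
      abs_exp_mulVec_sub_le hA hS hφ hdefect i htr hrs
    obtain ⟨L, hL⟩ := cauchySeq_tendsto_of_complete <| cauchySeq_of_norm_sub_le_sub
      (u := fun s => (exp ((t - s) • A) *ᵥ φ s) i) (hfence t i) fun _ _ => hineq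
    exact ⟨L, hL, by simpa using norm_sub_le_neg_of_tendsto hL (hfence t i) fun _ => hineq le_rfl⟩
  choose L hL hLb using hlim
  have hLt (t : ℝ) : L t = exp (t • A) *ᵥ L 0 :=
    tendsto_nhds_unique (tendsto_pi_nhds.2 (hL t))
      (tendsto_exp_const_sub_smul_mulVec (tendsto_pi_nhds.2 (hL 0)) t)
  refine ⟨L 0, fun t => (pi_norm_le_iff_of_nonneg (by positivity)).2 fun i => ?_⟩
  rw [← hLt, Pi.sub_apply, Real.norm_eq_abs, abs_sub_comm, mul_comm]
  exact (hLb t i).trans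
    (mul_le_mul_of_nonneg_left (mulVec_apply_le_linfty_opNorm _ (hS1 i) i) hε.le)

theorem isHyersUlamStable_of_mul_sub_eq_zero {A : Matrix n n ℝ} {l₁ l₂ : ℝ} (hl : l₂ < l₁)
    (hl₂ : 0 < l₂) (hA : (A - l₁ • 1) * (A - l₂ • 1) = 0)
    (hdiag : ∀ i, l₂ ≤ A i i ∧ A i i ≤ l₁) : IsHyersUlamStable A ‖A⁻¹‖ := by
  have hexp : ∀ u : ℝ, exp (u • A) = Real.exp (l₁ * u) • (l₁ - l₂)⁻¹ • (A - l₂ • 1) +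
      Real.exp (l₂ * u) • (l₁ - l₂)⁻¹ • (l₁ • 1 - A) :=
    exp_smul_eq_of_mul_sub_eq_zero hl.ne' hA
  have hsq := mul_self_eq_of_mul_sub_eq_zero hA
  refine isHyersUlamStable_of_sign_constant ?_ (fun i j => ?_) ?_
  · refine isUnit_det_of_right_inverse (B := (l₁ * l₂)⁻¹ • ((l₁ + l₂) • 1 - A)) ?_
    rw [mul_smul_comm, mul_sub, mul_smul_comm, mul_one, hsq, sub_sub_cancel,
      inv_smul_smul₀ (mul_pos (hl₂.trans hl) hl₂).ne']
  · simp only [hexp, Matrix.add_apply, Matrix.smul_apply, Matrix.sub_apply, smul_eq_mul]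
    refine nonneg_or_nonpos_of_exp_combination hl.le ?_
    rcases eq_or_ne i j with rfl | hij
    · have hΔ : 0 ≤ (l₁ - l₂)⁻¹ := inv_nonneg.2 (sub_pos.2 hl).le
      simp only [one_apply_eq, mul_one]
      exact Or.inl
        ⟨mul_nonneg hΔ (sub_nonneg.2 (hdiag i).1), mul_nonneg hΔ (sub_nonneg.2 (hdiag i).2)⟩
    · simp [one_apply_ne hij]
  · have h (l : ℝ) (hl : 0 < l) : Tendsto (fun u : ℝ => Real.exp (l * u)) atBot (𝓝 0) :=
      Real.tendsto_exp_atBot.comp (tendsto_id.const_mul_atBot hl)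
    simpa [hexp] using ((h l₁ (hl₂.trans hl)).smul_const ((l₁ - l₂)⁻¹ • (A - l₂ • 1))).add
      ((h l₂ hl₂).smul_const ((l₁ - l₂)⁻¹ • (l₁ • 1 - A)))

end

theorem stmt_6 (A : Matrix (Fin 2) (Fin 2) ℝ) (lam1 lam2 : ℝ)
    (h12 : lam1 > lam2) (h2 : lam2 > 0)
    (htr : A.trace = lam1 + lam2) (hdet : A.det = lam1 * lam2)
    (ha1 : lam1 ≥ A 0 0) (ha2 : A 0 0 ≥ lam2) :
    ∀ ε > (0:ℝ), ∀ φ : ℝ → (Fin 2 → ℝ), Differentiable ℝ φ →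
      (∀ t : ℝ, ‖deriv φ t - A.mulVec (φ t)‖ ≤ ε) →
      ∃ x₀ : Fin 2 → ℝ, ∀ t : ℝ,
        ‖φ t - (NormedSpace.exp (t • A)).mulVec x₀‖ ≤ matNormInf A⁻¹ * ε := by
  have h11 : A 1 1 = lam1 + lam2 - A 0 0 := by
    rw [trace_fin_two] at htr
    linarith
  have hdiag : ∀ i, lam2 ≤ A i i ∧ A i i ≤ lam1 := by
    intro i
    fin_cases i
    · exact ⟨ha2, ha1⟩
    · simp only [Fin.mk_one, h11]
      constructor <;> linarith
  rw [matNormInf_eq_linfty_opNorm]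
  exact isHyersUlamStable_of_mul_sub_eq_zero h12 h2
    (mul_sub_smul_one_eq_zero_of_trace_det htr hdet) hdiag
end

section
/- Let A = [[a, b],[c, −a]] be a 2×2 real matrix with a² + bc + β² = 0 for some β > 0 (so A has purely imaginary eigenvalues ±iβ). Then the system x'(t) = Ax(t) is not Hyers-Ulam stable on ℝ. -/
/-!
Since `A² = -β² • 1`, the exponential is `e^{tA} = cos (βt) • 1 + (sin (βt) / β) • A`, so it is
bounded on all of `ℝ`, by `C` say. Resonance then destroys stability: `φ t = t • e^{tA} v` has
bounded defect `φ' - Aφ = e^{tA} v`, but for every `x₀` the vector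
`e^{-tA} (φ t - e^{tA} x₀) = t • v - x₀` is unbounded, whereas it would be at most `C K ε`.
-/

open Matrix

section SquareNegScalar

variable {𝔸 : Type*} [NormedRing 𝔸] [NormedAlgebra ℝ 𝔸] [CompleteSpace 𝔸]

theorem exp_smul_eq_cos_add_sin_of_mul_self {β : ℝ} (hβ : β ≠ 0) {x : 𝔸}
    (hx : x * x = -(β ^ 2) • (1 : 𝔸)) (t : ℝ) :
    NormedSpace.exp (t • x) = Real.cos (β * t) • (1 : 𝔸) + (Real.sin (β * t) / β) • x := by
  set g : ℝ → 𝔸 := fun s => Real.cos (β * s) • (1 : 𝔸) + (Real.sin (β * s) / β) • x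
  have hg : ∀ s, HasDerivAt g (x * g s) s := by
    intro s
    have hβs : HasDerivAt (fun s => β * s) β s := by simpa using (hasDerivAt_id s).const_mul β
    refine ((hβs.cos.smul_const (1 : 𝔸)).add ((hβs.sin.div_const β).smul_const x)).congr_deriv ?_
    simp only [g, mul_add, mul_smul_comm, mul_one, hx, smul_smul, mul_div_cancel_right₀ _ hβ]
    rw [add_comm]
    congr 2
    field_simp
  have hconst : ∀ s, HasDerivAt (fun s => NormedSpace.exp (s • -x) * g s) 0 s := by
    intro s
    refine ((hasDerivAt_exp_smul_const (-x) s).mul (hg s)).congr_deriv ?_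
    noncomm_ring
  have hf : NormedSpace.exp (t • -x) * g t = NormedSpace.exp ((0 : ℝ) • -x) * g 0 :=
    is_const_of_deriv_eq_zero (fun s => (hconst s).differentiableAt) (fun s => (hconst s).deriv) t 0
  have hinv : NormedSpace.exp (t • x) * NormedSpace.exp (t • -x) = 1 := by
    -- `exp` does not depend on a `ℚ`-algebra structure; this one only makes the lemma applicable
    let _ : NormedAlgebra ℚ 𝔸 := NormedAlgebra.restrictScalars ℚ ℝ 𝔸
    rw [← NormedSpace.exp_add_of_commute ((Commute.refl x).neg_right.smul_left t |>.smul_right t),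
      smul_neg, add_neg_cancel, NormedSpace.exp_zero]
  calc NormedSpace.exp (t • x) = NormedSpace.exp (t • x) * (NormedSpace.exp (t • -x) * g t) := by
        rw [hf]; simp [g]
    _ = g t := by rw [← mul_assoc, hinv, one_mul]

theorem norm_exp_smul_le_of_mul_self [NormOneClass 𝔸] {β : ℝ} (hβ : 0 < β) {x : 𝔸}
    (hx : x * x = -(β ^ 2) • (1 : 𝔸)) (t : ℝ) :
    ‖NormedSpace.exp (t • x)‖ ≤ 1 + ‖x‖ / β := by
  rw [exp_smul_eq_cos_add_sin_of_mul_self hβ.ne' hx]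
  calc ‖Real.cos (β * t) • (1 : 𝔸) + (Real.sin (β * t) / β) • x‖
      ≤ |Real.cos (β * t)| * ‖(1 : 𝔸)‖ + |Real.sin (β * t)| / β * ‖x‖ := by
        grw [norm_add_le, norm_smul, norm_smul, Real.norm_eq_abs, Real.norm_eq_abs, abs_div,
          abs_of_pos hβ]
    _ ≤ 1 * 1 + 1 / β * ‖x‖ := by
        rw [norm_one]
        gcongr
        exacts [Real.abs_cos_le_one _, Real.abs_sin_le_one _]
    _ = 1 + ‖x‖ / β := by ring

end SquareNegScalar

theorem eq_zero_of_forall_norm_smul_sub_le {E : Type*} [NormedAddCommGroup E] [NormedSpace ℝ E]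
    {v w : E} {R : ℝ} (h : ∀ t : ℝ, ‖t • v - w‖ ≤ R) : v = 0 := by
  by_contra hv
  have hv' : 0 < ‖v‖ := norm_pos_iff.mpr hv
  set t := (R + ‖w‖ + 1) / ‖v‖
  have hR : 0 ≤ R := (norm_nonneg _).trans (h 0)
  have : ‖t • v‖ = R + ‖w‖ + 1 := by
    rw [norm_smul, Real.norm_eq_abs, abs_of_nonneg (by positivity), div_mul_cancel₀ _ hv'.ne']
  linarith [norm_le_norm_sub_add (t • v) w, h t]

section HyersUlam

variable {n : Type*} [Fintype n] [DecidableEq n]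

def HyersUlamStable (A : Matrix n n ℝ) : Prop :=
  ∃ K : ℝ, ∀ ε > (0:ℝ), ∀ φ : ℝ → (n → ℝ), Differentiable ℝ φ →
    (∀ t : ℝ, ‖deriv φ t - A.mulVec (φ t)‖ ≤ ε) →
    ∃ x₀ : n → ℝ, ∀ t : ℝ, ‖φ t - (NormedSpace.exp (t • A)).mulVec x₀‖ ≤ K * ε

open scoped Matrix.Norms.Operator

theorem hasDerivAt_exp_smul_mulVec (A : Matrix n n ℝ) (v : n → ℝ) (t : ℝ) :
    HasDerivAt (fun s : ℝ => NormedSpace.exp (s • A) *ᵥ v)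
      (A *ᵥ (NormedSpace.exp (t • A) *ᵥ v)) t := by
  let L : Matrix n n ℝ →L[ℝ] (n → ℝ) :=
    LinearMap.toContinuousLinearMap ((Matrix.mulVecBilin ℝ ℝ).flip v)
  rw [Matrix.mulVec_mulVec]
  exact L.hasFDerivAt.comp_hasDerivAt t (hasDerivAt_exp_smul_const' A t)

theorem exp_neg_smul_mulVec_exp_smul_mulVec (A : Matrix n n ℝ) (v : n → ℝ) (t : ℝ) :
    NormedSpace.exp (-t • A) *ᵥ (NormedSpace.exp (t • A) *ᵥ v) = v := by
  rw [Matrix.mulVec_mulVec,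
    ← Matrix.exp_add_of_commute _ _ ((Commute.refl A).smul_left _ |>.smul_right _), ← add_smul,
    neg_add_cancel, zero_smul, NormedSpace.exp_zero, Matrix.one_mulVec]

theorem not_hyersUlamStable_of_norm_exp_smul_le [Nonempty n] {A : Matrix n n ℝ} {C : ℝ}
    (hC : ∀ t : ℝ, ‖NormedSpace.exp (t • A)‖ ≤ C) : ¬ HyersUlamStable A := by
  rintro ⟨K, hK⟩
  set v : n → ℝ := fun _ => 1
  have hv : v ≠ 0 := fun h => one_ne_zero (congrFun h (Classical.arbitrary n))
  have hC_pos : 0 < C := zero_lt_one.trans_le (by simpa using hC 0)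
  set φ : ℝ → n → ℝ := fun t => t • (NormedSpace.exp (t • A) *ᵥ v)
  have hφ : ∀ t, HasDerivAt φ (NormedSpace.exp (t • A) *ᵥ v + A *ᵥ φ t) t := fun t => by
    refine ((hasDerivAt_id t).smul (hasDerivAt_exp_smul_mulVec A v t)).congr_deriv ?_
    rw [Matrix.mulVec_smul, one_smul, add_comm, id]
  have hdefect : ∀ t, ‖deriv φ t - A *ᵥ φ t‖ ≤ C * ‖v‖ := by
    intro t
    rw [(hφ t).deriv, add_sub_cancel_right]
    exact (Matrix.linfty_opNorm_mulVec _ _).trans (by gcongr; exact hC t)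
  obtain ⟨x₀, hx₀⟩ := hK (C * ‖v‖) (by positivity) φ (fun t => (hφ t).differentiableAt) hdefect
  refine hv (eq_zero_of_forall_norm_smul_sub_le (w := x₀) (R := C * (K * (C * ‖v‖))) fun t => ?_)
  calc ‖t • v - x₀‖
      = ‖NormedSpace.exp (-t • A) *ᵥ (φ t - NormedSpace.exp (t • A) *ᵥ x₀)‖ := by
        rw [Matrix.mulVec_sub, Matrix.mulVec_smul, exp_neg_smul_mulVec_exp_smul_mulVec,
          exp_neg_smul_mulVec_exp_smul_mulVec]
    _ ≤ C * (K * (C * ‖v‖)) := by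
        grw [Matrix.linfty_opNorm_mulVec, hC, hx₀]

end HyersUlam

theorem mul_self_traceless_fin_two (a b c : ℝ) :
    !![a, b; c, -a] * !![a, b; c, -a] = (a ^ 2 + b * c) • (1 : Matrix (Fin 2) (Fin 2) ℝ) := by
  ext i j
  fin_cases i <;> fin_cases j <;> simp <;> ring

theorem stmt_12 (a b c beta : ℝ) (hbeta : beta > 0)
    (h : a ^ 2 + b * c + beta ^ 2 = 0)
    (A : Matrix (Fin 2) (Fin 2) ℝ) (hA : A = !![a, b; c, -a]) :
    ¬ ∃ K : ℝ, ∀ ε > (0:ℝ), ∀ φ : ℝ → (Fin 2 → ℝ), Differentiable ℝ φ →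
      (∀ t : ℝ, ‖deriv φ t - A.mulVec (φ t)‖ ≤ ε) →
      ∃ x₀ : Fin 2 → ℝ, ∀ t : ℝ,
        ‖φ t - (NormedSpace.exp (t • A)).mulVec x₀‖ ≤ K * ε := by
  have hA2 : A * A = -(beta ^ 2) • (1 : Matrix (Fin 2) (Fin 2) ℝ) := by
    rw [hA, mul_self_traceless_fin_two, show a ^ 2 + b * c = -(beta ^ 2) by linarith]
  open scoped Matrix.Norms.Operator in
  exact not_hyersUlamStable_of_norm_exp_smul_le (norm_exp_smul_le_of_mul_self hbeta hA2)
end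

section
/- Let λ₁ = λ₂ = λ > 0 and consider the matrix A = [[λ, 1],[0, λ]] arising from the substitution u = x' − λx in the equation x'' − 2λx' + λ²x = 0. Then the system x' = Ax is Hyers-Ulam stable on ℝ with best (minimal) constant K = (1+λ)/λ² = ‖A⁻¹‖_∞. -/
/-!
Upper bound: a scalar equation `ψ' = λψ + h` with `|h| ≤ M` and `λ > 0` has `e^{-λt}(ψ - M/λ)`
monotone and `e^{-λt}(ψ + M/λ)` antitone, so a constant `c` squeezed between them gives
`|ψ t - c e^{λt}| ≤ M/λ`. This handles the second component with `M = ε`; subtracting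
`c₁ t e^{λt}` from the first component turns it into such an equation with `M = ε + ε/λ`,
which gives the constant `(1 + λ)/λ²`.

Lower bound: the constant function `p = -A⁻¹ (1, -1)` has defect `(1, -1)` of norm `1`, and every
solution of `x' = Ax` tends to `0` at `-∞`, so `K ≥ ‖p‖ = (1 + λ)/λ² = ‖A⁻¹‖_∞`.
-/

open Matrix

/-- Hyers-Ulam stability of `x' = Ax` on `ℝ` with constant `K` (max norm on `ℝ²`). -/
def IsHUSWith (A : Matrix (Fin 2) (Fin 2) ℝ) (K : ℝ) : Prop :=
  ∀ ε > (0:ℝ), ∀ φ : ℝ → (Fin 2 → ℝ), Differentiable ℝ φ →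
    (∀ t : ℝ, ‖deriv φ t - A.mulVec (φ t)‖ ≤ ε) →
    ∃ x₀ : Fin 2 → ℝ, ∀ t : ℝ,
      ‖φ t - (NormedSpace.exp (t • A)).mulVec x₀‖ ≤ K * ε

open Filter Topology

theorem NormedSpace.exp_eq_one_add_of_sq_eq_zero {𝔸 : Type*} [Ring 𝔸] [Algebra ℚ 𝔸]
    [TopologicalSpace 𝔸] [IsTopologicalRing 𝔸] [T2Space 𝔸] {a : 𝔸} (h : a ^ 2 = 0) :
    NormedSpace.exp a = 1 + a := by
  have hvanish : ∀ n ∉ Finset.range 2, ((n.factorial : ℚ)⁻¹ • a ^ n) = 0 := fun n hn => by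
    rw [pow_eq_zero_of_le (not_lt.1 (Finset.mem_range.not.1 hn)) h, smul_zero]
  rw [NormedSpace.exp_eq_tsum_rat]
  beta_reduce
  rw [tsum_eq_sum hvanish]
  simp [Finset.sum_range_succ]

theorem exp_smul_jordanBlock (lam t : ℝ) :
    NormedSpace.exp (t • !![lam, 1; 0, lam]) = Real.exp (lam * t) • !![1, t; 0, 1] := by
  have hsplit :
      t • !![lam, 1; 0, lam] = diagonal (fun _ : Fin 2 => lam * t) + t • !![0, 1; 0, 0] := by
    ext i j; fin_cases i <;> fin_cases j <;> simp [mul_comm]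
  have hcomm : Commute (diagonal fun _ : Fin 2 => lam * t) (t • !![(0 : ℝ), 1; 0, 0]) := by
    rw [← smul_one_eq_diagonal]
    exact (Commute.one_left _).smul_left _
  have hnil : (t • !![(0 : ℝ), 1; 0, 0]) ^ 2 = 0 := by
    ext i j; fin_cases i <;> fin_cases j <;> simp [sq]
  rw [hsplit, Matrix.exp_add_of_commute _ _ hcomm, exp_diagonal,
    NormedSpace.exp_eq_one_add_of_sq_eq_zero hnil, Pi.exp_def, ← Real.exp_eq_exp_ℝ]
  ext i j; fin_cases i <;> fin_cases j <;> simp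

theorem exp_smul_jordanBlock_mulVec (lam t : ℝ) (x : Fin 2 → ℝ) :
    (NormedSpace.exp (t • !![lam, 1; 0, lam])) *ᵥ x =
      ![(x 0 + t * x 1) * Real.exp (lam * t), x 1 * Real.exp (lam * t)] := by
  rw [exp_smul_jordanBlock, smul_mulVec, mulVec_fin_two]
  ext i; fin_cases i <;> simp [add_mul, mul_comm]

theorem exists_forall_le_le_of_monotone_of_antitone {α β : Type*} [SemilatticeSup α] [Nonempty α]
    [ConditionallyCompleteLattice β] {w v : α → β} (hw : Monotone w) (hv : Antitone v)
    (hwv : ∀ t, w t ≤ v t) : ∃ c, ∀ t, w t ≤ c ∧ c ≤ v t := by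
  have hle : ∀ s t, w s ≤ v t := fun s t =>
    (hw le_sup_left).trans ((hwv (s ⊔ t)).trans (hv le_sup_right))
  obtain ⟨t₀⟩ := ‹Nonempty α›
  exact ⟨⨆ s, w s, fun t => ⟨le_ciSup ⟨v t₀, Set.forall_mem_range.2 (hle · t₀)⟩ t,
    ciSup_le (hle · t)⟩⟩

section ScalarEquation

variable {lam M : ℝ} {ψ h : ℝ → ℝ}

theorem hasDerivAt_exp_neg_mul_mul_add (hd : ∀ t, HasDerivAt ψ (lam * ψ t + h t) t) (k t : ℝ) :
    HasDerivAt (fun s => Real.exp (-(lam * s)) * (ψ s + k))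
      (Real.exp (-(lam * t)) * (h t - lam * k)) t := by
  have hexp : HasDerivAt (fun s => Real.exp (-(lam * s))) (Real.exp (-(lam * t)) * -(lam * 1)) t :=
    ((hasDerivAt_id' t).const_mul lam).neg.exp
  exact (hexp.mul ((hd t).add_const k)).congr_deriv (by ring)

theorem exists_abs_sub_mul_exp_le (hlam : 0 < lam) (hd : ∀ t, HasDerivAt ψ (lam * ψ t + h t) t)
    (hb : ∀ t, |h t| ≤ M) : ∃ c, ∀ t, |ψ t - c * Real.exp (lam * t)| ≤ M / lam := by
  have hlamM : lam * (M / lam) = M := mul_div_cancel₀ M hlam.ne'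
  have hw : Monotone fun s => Real.exp (-(lam * s)) * (ψ s + -(M / lam)) :=
    monotone_of_hasDerivAt_nonneg (hasDerivAt_exp_neg_mul_mul_add hd _) fun t =>
      mul_nonneg (Real.exp_pos _).le (by linarith [(abs_le.1 (hb t)).1, hlamM])
  have hv : Antitone fun s => Real.exp (-(lam * s)) * (ψ s + M / lam) :=
    antitone_of_hasDerivAt_nonpos (hasDerivAt_exp_neg_mul_mul_add hd _) fun t =>
      mul_nonpos_of_nonneg_of_nonpos (Real.exp_pos _).le (by linarith [(abs_le.1 (hb t)).2, hlamM])
  have hM : 0 ≤ M / lam := div_nonneg ((abs_nonneg _).trans (hb 0)) hlam.le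
  obtain ⟨c, hc⟩ := exists_forall_le_le_of_monotone_of_antitone hw hv fun t => by
    gcongr; linarith
  refine ⟨c, fun t => abs_sub_le_iff.2 ?_⟩
  obtain ⟨hc₁, hc₂⟩ := hc t
  rw [Real.exp_neg, inv_mul_le_iff₀ (Real.exp_pos _)] at hc₁
  rw [Real.exp_neg, le_inv_mul_iff₀ (Real.exp_pos _)] at hc₂
  constructor <;> linarith

end ScalarEquation

theorem exists_abs_sub_jordanBlock_solution_le {lam ε : ℝ} (hlam : 0 < lam)
    {ψ₀ ψ₁ h₀ h₁ : ℝ → ℝ} (hd₀ : ∀ t, HasDerivAt ψ₀ (lam * ψ₀ t + ψ₁ t + h₀ t) t)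
    (hd₁ : ∀ t, HasDerivAt ψ₁ (lam * ψ₁ t + h₁ t) t)
    (hb₀ : ∀ t, |h₀ t| ≤ ε) (hb₁ : ∀ t, |h₁ t| ≤ ε) :
    ∃ c₀ c₁, ∀ t, |ψ₀ t - (c₀ + t * c₁) * Real.exp (lam * t)| ≤ (ε + ε / lam) / lam ∧
      |ψ₁ t - c₁ * Real.exp (lam * t)| ≤ ε / lam := by
  obtain ⟨c₁, hc₁⟩ := exists_abs_sub_mul_exp_le hlam hd₁ hb₁
  have hd : ∀ t, HasDerivAt (fun s => ψ₀ s - c₁ * (s * Real.exp (lam * s)))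
      (lam * (ψ₀ t - c₁ * (t * Real.exp (lam * t))) +
        (h₀ t + (ψ₁ t - c₁ * Real.exp (lam * t)))) t := fun t => by
    have hexp : HasDerivAt (fun s => Real.exp (lam * s)) (Real.exp (lam * t) * (lam * 1)) t :=
      ((hasDerivAt_id' t).const_mul lam).exp
    exact ((hd₀ t).sub (((hasDerivAt_id' t).mul hexp).const_mul c₁)).congr_deriv (by ring)
  obtain ⟨c₀, hc₀⟩ := exists_abs_sub_mul_exp_le hlam hd fun t =>
    (abs_add_le _ _).trans (add_le_add (hb₀ t) (hc₁ t))
  refine ⟨c₀, c₁, fun t => ⟨?_, hc₁ t⟩⟩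
  convert hc₀ t using 2
  ring

theorem isHUSWith_jordanBlock {lam : ℝ} (hlam : 0 < lam) :
    IsHUSWith !![lam, 1; 0, lam] ((1 + lam) / lam ^ 2) := by
  intro ε hε φ hφ hb
  have hd : ∀ i t, HasDerivAt (fun s => φ s i) (deriv φ t i) t := fun i t =>
    hasDerivAt_pi.1 (hφ t).hasDerivAt i
  have hdefect : ∀ i t, |(deriv φ t - !![lam, 1; 0, lam] *ᵥ φ t) i| ≤ ε := fun i t =>
    (norm_le_pi_norm _ i).trans (hb t)
  obtain ⟨c₀, c₁, hc⟩ := exists_abs_sub_jordanBlock_solution_le hlam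
    (h₀ := fun t => deriv φ t 0 - (lam * φ t 0 + φ t 1)) (h₁ := fun t => deriv φ t 1 - lam * φ t 1)
    (fun t => (hd 0 t).congr_deriv (by ring)) (fun t => (hd 1 t).congr_deriv (by ring))
    (fun t => by simpa [vecHead, vecTail] using hdefect 0 t)
    (fun t => by simpa [vecHead, vecTail] using hdefect 1 t)
  refine ⟨![c₀, c₁], fun t => (pi_norm_le_iff_of_nonneg (by positivity)).2 fun i => ?_⟩
  have hK : (ε + ε / lam) / lam = (1 + lam) / lam ^ 2 * ε := by field_simp; ring
  have hK' : ε / lam ≤ (1 + lam) / lam ^ 2 * ε := by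
    rw [← hK]
    gcongr
    exact le_add_of_nonneg_right (by positivity)
  rw [exp_smul_jordanBlock_mulVec, Real.norm_eq_abs]
  fin_cases i
  · simpa [← hK] using (hc t).1
  · simpa using (hc t).2.trans hK'

theorem tendsto_exp_smul_jordanBlock_mulVec_atBot {lam : ℝ} (hlam : 0 < lam) (x : Fin 2 → ℝ) :
    Tendsto (fun t : ℝ => NormedSpace.exp (t • !![lam, 1; 0, lam]) *ᵥ x) atBot (𝓝 0) := by
  have hlin : Tendsto (fun t => lam * t) atBot atBot := tendsto_id.const_mul_atBot hlam
  have hE : Tendsto (fun t => Real.exp (lam * t)) atBot (𝓝 0) := Real.tendsto_exp_atBot.comp hlin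
  have htE : Tendsto (fun t => t * Real.exp (lam * t)) atBot (𝓝 0) := by
    have := ((Real.tendsto_pow_mul_exp_neg_atTop_nhds_zero 1).comp
      (tendsto_neg_atBot_atTop.comp hlin)).const_mul (-lam⁻¹)
    rw [mul_zero] at this
    refine this.congr fun t => ?_
    simp only [Function.comp_apply, pow_one, neg_neg]
    field_simp
  simp_rw [exp_smul_jordanBlock_mulVec, tendsto_pi_nhds, Fin.forall_fin_two, cons_val_zero,
    cons_val_one, Pi.zero_apply]
  constructor
  · have := (hE.const_mul (x 0)).add (htE.const_mul (x 1))
    rw [mul_zero, mul_zero, add_zero] at this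
    exact this.congr fun t => by ring
  · simpa using hE.const_mul (x 1)

theorem le_of_isHUSWith_jordanBlock {lam K : ℝ} (hlam : 0 < lam)
    (hK : IsHUSWith !![lam, 1; 0, lam] K) : (1 + lam) / lam ^ 2 ≤ K := by
  set p : Fin 2 → ℝ := ![-((1 + lam) / lam ^ 2), 1 / lam]
  have hAp : !![lam, 1; 0, lam] *ᵥ p = ![-1, 1] := by
    ext i; fin_cases i
    · simp [p]; field_simp; ring
    · simp [p, hlam.ne']
  have hdefect : ∀ t : ℝ, ‖deriv (fun _ : ℝ => p) t - !![lam, 1; 0, lam] *ᵥ p‖ ≤ 1 := fun t => by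
    rw [deriv_const, hAp, pi_norm_le_iff_of_nonneg zero_le_one]
    intro i
    fin_cases i <;> simp
  obtain ⟨x₀, hx₀⟩ := hK 1 one_pos _ (differentiable_const (𝕜 := ℝ) p) hdefect
  have hp : ‖p‖ ≤ K := by
    have hlim :=
      (tendsto_const_nhds (x := p)).sub (tendsto_exp_smul_jordanBlock_mulVec_atBot hlam x₀)
    rw [sub_zero] at hlim
    exact le_of_tendsto' hlim.norm fun t => by simpa using hx₀ t
  calc (1 + lam) / lam ^ 2 = ‖p 0‖ := by simp [p, abs_of_pos (by positivity : 0 < 1 + lam)]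
    _ ≤ ‖p‖ := norm_le_pi_norm p 0
    _ ≤ K := hp

theorem inv_jordanBlock {lam : ℝ} (hlam : lam ≠ 0) :
    (!![lam, 1; 0, lam])⁻¹ = !![lam⁻¹, -(lam ^ 2)⁻¹; 0, lam⁻¹] := by
  refine inv_eq_right_inv ?_
  ext i j; fin_cases i <;> fin_cases j <;> simp [sq, hlam]

theorem matNormInf_inv_jordanBlock {lam : ℝ} (hlam : 0 < lam) :
    matNormInf (!![lam, 1; 0, lam])⁻¹ = (1 + lam) / lam ^ 2 := by
  have hsum : (1 + lam) / lam ^ 2 = lam⁻¹ + (lam ^ 2)⁻¹ := by field_simp; ring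
  rw [hsum, inv_jordanBlock hlam.ne', matNormInf]
  simp [abs_of_pos hlam, hlam.le]

theorem stmt_19 (lam : ℝ) (hlam : 0 < lam)
    (A : Matrix (Fin 2) (Fin 2) ℝ) (hA : A = !![lam, 1; 0, lam]) :
    (1 + lam) / lam ^ 2 = matNormInf A⁻¹ ∧
    IsHUSWith A ((1 + lam) / lam ^ 2) ∧
    ∀ K : ℝ, IsHUSWith A K → K ≥ (1 + lam) / lam ^ 2 := by
  subst hA
  exact ⟨(matNormInf_inv_jordanBlock hlam).symm, isHUSWith_jordanBlock hlam,
    fun _ => le_of_isHUSWith_jordanBlock hlam⟩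
end
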